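/- arXiv:2207.13437 — 3 statements merged into one kernel-verified Lean document; each statement's English description precedes it below -/
import Mathlib

section
/- Let f, g : ℝ → ℝ be continuous functions satisfying |f(x)| ≤ C₁/(1+|x|²) and |g(x)| ≤ C₁/(1+|x|²) for all x and some constant C₁ > 0. Then there exists C > 0 such that for every sufficiently small ε > 0, ∫ℝ |f(x) g(x + 1/ε)| dx ≤ C ε². -/
open MeasureTheory Real

/-! Two Lorentzian profiles centred a distance `R` apart cannot both be large at the same point:
`(x - y)² ≤ 2 ((1 + x²) + (1 + y²))` turns their product into `2 / R²` times their sum, whose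
integral is `2π`. With `R = 1 / ε` this gives the bound `4π C₁² ε²`. -/

theorem inv_one_add_sq_mul_inv_one_add_sq_le {x y : ℝ} (hxy : x ≠ y) :
    (1 + x ^ 2)⁻¹ * (1 + y ^ 2)⁻¹ ≤ 2 / (x - y) ^ 2 * ((1 + x ^ 2)⁻¹ + (1 + y ^ 2)⁻¹) := by
  have hsub : 0 < (x - y) ^ 2 := by positivity [sub_ne_zero.mpr hxy]
  rw [div_mul_eq_mul_div, le_div_iff₀ hsub, ← sub_nonneg]
  have key : 0 ≤ 2 * ((1 + y ^ 2) + (1 + x ^ 2)) - (x - y) ^ 2 := by nlinarith [sq_nonneg (x + y)]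
  have expand : 2 * ((1 + x ^ 2)⁻¹ + (1 + y ^ 2)⁻¹) - (1 + x ^ 2)⁻¹ * (1 + y ^ 2)⁻¹ * (x - y) ^ 2
      = (2 * ((1 + y ^ 2) + (1 + x ^ 2)) - (x - y) ^ 2) * ((1 + x ^ 2)⁻¹ * (1 + y ^ 2)⁻¹) := by
    field_simp
  rw [expand]
  positivity

theorem integrable_inv_one_add_sq_add_shift (R : ℝ) :
    Integrable fun x : ℝ => (1 + x ^ 2)⁻¹ + (1 + (x + R) ^ 2)⁻¹ :=
  integrable_inv_one_add_sq.add (integrable_inv_one_add_sq.comp_add_right R)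

theorem integral_inv_one_add_sq_add_shift (R : ℝ) :
    ∫ x : ℝ, ((1 + x ^ 2)⁻¹ + (1 + (x + R) ^ 2)⁻¹) = 2 * π := by
  rw [integral_add integrable_inv_one_add_sq (integrable_inv_one_add_sq.comp_add_right R),
    integral_add_right_eq_self (fun x : ℝ => (1 + x ^ 2)⁻¹) R, integral_univ_inv_one_add_sq]
  ring

theorem integral_abs_mul_comp_add_le {f g : ℝ → ℝ} {A B : ℝ}
    (hf : ∀ x, |f x| ≤ A / (1 + x ^ 2)) (hg : ∀ x, |g x| ≤ B / (1 + x ^ 2))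
    {R : ℝ} (hR : R ≠ 0) :
    ∫ x : ℝ, |f x * g (x + R)| ≤ 4 * π * A * B / R ^ 2 := by
  have hA : 0 ≤ A := by simpa using (abs_nonneg _).trans (hf 0)
  have hB : 0 ≤ B := by simpa using (abs_nonneg _).trans (hg 0)
  have hpointwise : ∀ x, |f x * g (x + R)|
      ≤ 2 * A * B / R ^ 2 * ((1 + x ^ 2)⁻¹ + (1 + (x + R) ^ 2)⁻¹) := fun x => by
    have hne : x + R ≠ x := by simpa using hR
    calc |f x * g (x + R)| ≤ A / (1 + x ^ 2) * (B / (1 + (x + R) ^ 2)) := by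
          rw [abs_mul]; exact mul_le_mul (hf x) (hg _) (abs_nonneg _) (by positivity)
      _ = A * B * ((1 + (x + R) ^ 2)⁻¹ * (1 + x ^ 2)⁻¹) := by ring
      _ ≤ A * B * (2 / (x + R - x) ^ 2 * ((1 + (x + R) ^ 2)⁻¹ + (1 + x ^ 2)⁻¹)) :=
          mul_le_mul_of_nonneg_left (inv_one_add_sq_mul_inv_one_add_sq_le hne) (by positivity)
      _ = 2 * A * B / R ^ 2 * ((1 + x ^ 2)⁻¹ + (1 + (x + R) ^ 2)⁻¹) := by ring
  calc ∫ x : ℝ, |f x * g (x + R)|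
      ≤ ∫ x : ℝ, 2 * A * B / R ^ 2 * ((1 + x ^ 2)⁻¹ + (1 + (x + R) ^ 2)⁻¹) :=
        integral_mono_of_nonneg (.of_forall fun _ => abs_nonneg _)
          ((integrable_inv_one_add_sq_add_shift R).const_mul _) (.of_forall hpointwise)
    _ = 4 * π * A * B / R ^ 2 := by
        rw [integral_const_mul, integral_inv_one_add_sq_add_shift]; ring

theorem decoupling_estimate_shift_general
    (f g : ℝ → ℝ)
    (C₁ : ℝ) (hC₁ : 0 < C₁)
    (hfb : ∀ x, |f x| ≤ C₁ / (1 + x ^ 2))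
    (hgb : ∀ x, |g x| ≤ C₁ / (1 + x ^ 2)) :
    ∃ C > 0, ∃ ε₀ > 0, ∀ ε : ℝ, 0 < ε → ε < ε₀ →
      ∫ x : ℝ, |f x * g (x + 1 / ε)| ≤ C * ε ^ 2 := by
  refine ⟨4 * π * C₁ ^ 2, by positivity, 1, one_pos, fun ε hε _ => ?_⟩
  calc ∫ x : ℝ, |f x * g (x + 1 / ε)| ≤ 4 * π * C₁ * C₁ / (1 / ε) ^ 2 :=
        integral_abs_mul_comp_add_le hfb hgb (by positivity)
    _ = 4 * π * C₁ ^ 2 * ε ^ 2 := by field_simp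

/-- Decoupling estimate (Lemma A.7, first part): for continuous `f, g` with
quadratic decay, `∫ |f(x) g(x + 1/ε)| dx ≤ C ε²` for all sufficiently small `ε > 0`. -/
theorem decoupling_estimate_shift
    (f g : ℝ → ℝ) (hf : Continuous f) (hg : Continuous g)
    (C₁ : ℝ) (hC₁ : 0 < C₁)
    (hfb : ∀ x, |f x| ≤ C₁ / (1 + x ^ 2))
    (hgb : ∀ x, |g x| ≤ C₁ / (1 + x ^ 2)) :
    ∃ C > 0, ∃ ε₀ > 0, ∀ ε : ℝ, 0 < ε → ε < ε₀ →
      ∫ x : ℝ, |f x * g (x + 1 / ε)| ≤ C * ε ^ 2 :=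
  decoupling_estimate_shift_general f g C₁ hC₁ hfb hgb
end

section
/- Let s > 1/2. There exists C > 0 (depending on s) such that for every f ∈ H^s(ℝ), ‖f‖_{L^∞} ≤ C ‖f‖_{H^{1/2}} (ln(2 + ‖f‖_{H^s}/‖f‖_{H^{1/2}}))^{1/2}. -/
/-!
Since `‖𝓕⁻¹ g x‖ ≤ ∫ ‖g‖`, it suffices to bound `∫ ‖g‖`. Split it at a frequency `R`. By a
weighted Cauchy–Schwarz inequality, the part over `[-R, R]` is at most
`√(2 arsinh R) ‖f‖_{H^{1/2}}` and the tail is at most `√(2 R^{1-2s}/(2s-1)) ‖f‖_{H^s}`. The cut-off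
`R = t^{2/(2s-1)}` with `t = ‖f‖_{H^s}/‖f‖_{H^{1/2}}` makes the tail `O(‖f‖_{H^{1/2}})`, while
`arsinh R = O(log (2 + t))`.
-/

open MeasureTheory Set Real

theorem le_half_mul_inv_add_inv_mul_mul_sq {w l : ℝ} (hw : 0 < w) (hl : 0 < l) (x : ℝ) :
    x ≤ (l * w⁻¹ + l⁻¹ * (w * x ^ 2)) / 2 := by
  have hdiff : (l * w⁻¹ + l⁻¹ * (w * x ^ 2)) / 2 - x = (l - w * x) ^ 2 / (2 * l * w) := by
    field_simp
    ring
  have : 0 ≤ (l - w * x) ^ 2 / (2 * l * w) := by positivity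
  linarith

section Weighted

variable {α E : Type*} [MeasurableSpace α] [NormedAddCommGroup E] {μ : Measure α}
  {w : α → ℝ} {g : α → E}

theorem integrable_norm_of_weighted (hw : ∀ a, 0 < w a) (hg : AEStronglyMeasurable g μ)
    (hwinv : Integrable (fun a => (w a)⁻¹) μ) (hwg : Integrable (fun a => w a * ‖g a‖ ^ 2) μ) :
    Integrable (fun a => ‖g a‖) μ := by
  refine ((hwinv.add hwg).div_const 2).mono' hg.norm (.of_forall fun a => ?_)
  simpa [abs_of_nonneg (norm_nonneg _)] using
    le_half_mul_inv_add_inv_mul_mul_sq (hw a) one_pos ‖g a‖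

theorem integral_norm_le_sqrt_mul_sqrt_of_weighted (hw : ∀ a, 0 < w a)
    (hg : AEStronglyMeasurable g μ) (hwinv : Integrable (fun a => (w a)⁻¹) μ)
    (hwg : Integrable (fun a => w a * ‖g a‖ ^ 2) μ) {I J : ℝ} (hI : 0 < I) (hJ : 0 < J)
    (hwinv_le : ∫ a, (w a)⁻¹ ∂μ ≤ I) (hwg_le : ∫ a, w a * ‖g a‖ ^ 2 ∂μ ≤ J) :
    ∫ a, ‖g a‖ ∂μ ≤ √I * √J := by
  -- AM-GM with the ratio `l` that balances the two terms
  set l := √J / √I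
  have hl : 0 < l := by positivity
  have hmaj := ((hwinv.const_mul l).add (hwg.const_mul l⁻¹)).div_const 2
  calc ∫ a, ‖g a‖ ∂μ
      ≤ ∫ a, (l * (w a)⁻¹ + l⁻¹ * (w a * ‖g a‖ ^ 2)) / 2 ∂μ :=
        integral_mono (integrable_norm_of_weighted hw hg hwinv hwg) hmaj
          fun a => le_half_mul_inv_add_inv_mul_mul_sq (hw a) hl _
    _ = (l * ∫ a, (w a)⁻¹ ∂μ + l⁻¹ * ∫ a, w a * ‖g a‖ ^ 2 ∂μ) / 2 := by
        rw [integral_div, integral_add (hwinv.const_mul l) (hwg.const_mul l⁻¹),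
          integral_const_mul, integral_const_mul]
    _ ≤ (l * I + l⁻¹ * J) / 2 := by gcongr
    _ = √I * √J := by
        have hI' : 0 < √I := sqrt_pos.2 hI
        have hJ' : 0 < √J := sqrt_pos.2 hJ
        simp only [l]
        field_simp
        rw [sq_sqrt hI.le, sq_sqrt hJ.le]
        ring

theorem integral_norm_eq_zero_of_weighted (hw : ∀ a, 0 < w a)
    (hwg : Integrable (fun a => w a * ‖g a‖ ^ 2) μ) (h0 : ∫ a, w a * ‖g a‖ ^ 2 ∂μ = 0) :
    ∫ a, ‖g a‖ ∂μ = 0 := by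
  have hae := (integral_eq_zero_iff_of_nonneg
    (fun a => mul_nonneg (hw a).le (sq_nonneg _)) hwg).1 h0
  rw [← integral_zero α ℝ]
  refine integral_congr_ae (hae.mono fun a ha => ?_)
  simpa [(hw a).ne'] using ha

end Weighted

theorem integral_Icc_inv_sqrt_one_add_sq {R : ℝ} (hR : 0 ≤ R) :
    ∫ ξ in Icc (-R) R, (√(1 + ξ ^ 2))⁻¹ = 2 * arsinh R := by
  have hcont : Continuous fun ξ : ℝ => (√(1 + ξ ^ 2))⁻¹ :=
    (by fun_prop : Continuous fun ξ : ℝ => √(1 + ξ ^ 2)).inv₀ fun ξ => by positivity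
  rw [integral_Icc_eq_integral_Ioc, ← intervalIntegral.integral_of_le (by linarith),
    intervalIntegral.integral_eq_sub_of_hasDerivAt (fun ξ _ => hasDerivAt_arsinh ξ)
      (hcont.intervalIntegrable _ _), arsinh_neg]
  ring

theorem arsinh_le_two_mul_log_two_add {R : ℝ} (hR : 0 ≤ R) : arsinh R ≤ 2 * log (2 + R) := by
  have hsqrt : √(1 + R ^ 2) ≤ 1 + R := sqrt_le_iff.2 ⟨by linarith, by nlinarith⟩
  calc arsinh R ≤ log ((2 + R) ^ 2) := log_le_log (by positivity) (by nlinarith)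
    _ = 2 * log (2 + R) := by rw [log_pow]; norm_num

theorem integrable_inv_one_add_sq_rpow {s : ℝ} (hs : 1 / 2 < s) :
    Integrable fun ξ : ℝ => ((1 + ξ ^ 2) ^ s)⁻¹ := by
  refine (integrable_rpow_neg_one_add_norm_sq (E := ℝ) (μ := volume) (r := 2 * s)
    (by simp; linarith)).congr (.of_forall fun ξ => ?_)
  simp only [norm_eq_abs, sq_abs]
  rw [show -(2 * s) / 2 = -s by ring, rpow_neg (by positivity)]

theorem integral_Ioi_inv_one_add_sq_rpow_le {s R : ℝ} (hs : 1 / 2 < s) (hR : 0 < R) :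
    ∫ ξ in Ioi R, ((1 + ξ ^ 2) ^ s)⁻¹ ≤ R ^ (1 - 2 * s) / (2 * s - 1) := by
  have hle : ∫ ξ in Ioi R, ((1 + ξ ^ 2) ^ s)⁻¹ ≤ ∫ ξ in Ioi R, ξ ^ (-(2 * s)) := by
    refine setIntegral_mono_on (integrable_inv_one_add_sq_rpow hs).integrableOn
      (integrableOn_Ioi_rpow_of_lt (by linarith) hR) measurableSet_Ioi fun ξ hξ => ?_
    have hξ0 : 0 < ξ := hR.trans hξ
    rw [rpow_neg hξ0.le, rpow_mul hξ0.le]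
    gcongr
    norm_cast
    linarith
  rwa [integral_Ioi_rpow_of_lt (by linarith) hR, show -(2 * s) + 1 = 1 - 2 * s by ring,
    neg_div, ← div_neg, neg_sub] at hle

theorem integral_compl_Icc_inv_one_add_sq_rpow_le {s R : ℝ} (hs : 1 / 2 < s) (hR : 0 < R) :
    ∫ ξ in (Icc (-R) R)ᶜ, ((1 + ξ ^ 2) ^ s)⁻¹ ≤ 2 * R ^ (1 - 2 * s) / (2 * s - 1) := by
  have hint := (integrable_inv_one_add_sq_rpow hs).integrableOn (s := Ioi R)
  have hsymm : ∫ ξ in Iio (-R), ((1 + ξ ^ 2) ^ s)⁻¹ = ∫ ξ in Ioi R, ((1 + ξ ^ 2) ^ s)⁻¹ := by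
    rw [← integral_Iic_eq_integral_Iio, ← integral_comp_neg_Ioi]
    simp only [even_two, Even.neg_pow]
  have hcompl : (Icc (-R) R)ᶜ = Iio (-R) ∪ Ioi R := by
    ext ξ
    simp only [mem_compl_iff, mem_Icc, not_and_or, not_le, mem_union, mem_Iio, mem_Ioi]
  have hdisj : Disjoint (Iio (-R)) (Ioi R) :=
    (Iic_disjoint_Ioi (by linarith)).mono_left Iio_subset_Iic_self
  rw [hcompl, setIntegral_union hdisj measurableSet_Ioi
    (integrable_inv_one_add_sq_rpow hs).integrableOn hint, hsymm, mul_div_assoc]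
  linarith [integral_Ioi_inv_one_add_sq_rpow_le hs hR]

theorem log_two_add_rpow_le {t α : ℝ} (ht : 1 ≤ t) (hα : 0 ≤ α) :
    log (2 + t ^ α) ≤ (α + 1) * log (2 + t) := by
  rw [← log_rpow (by positivity)]
  refine log_le_log (by positivity) ?_
  have h1 : t ^ α ≤ (2 + t) ^ α := rpow_le_rpow (by linarith) (by linarith) hα
  have h2 : 1 ≤ t ^ α := one_le_rpow ht hα
  rw [rpow_add_one (by positivity)]
  nlinarith

section FrequencySplit

variable {E : Type*} [NormedAddCommGroup E] {s : ℝ} {g : ℝ → E}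

theorem sqrt_one_add_sq_le_rpow (hs : 1 / 2 ≤ s) (ξ : ℝ) : √(1 + ξ ^ 2) ≤ (1 + ξ ^ 2) ^ s := by
  rw [sqrt_eq_rpow]
  exact rpow_le_rpow_of_exponent_le (le_add_of_nonneg_right (sq_nonneg ξ)) hs

theorem integrable_sqrt_one_add_sq_mul_of_rpow (hs : 1 / 2 ≤ s) (hg : AEStronglyMeasurable g)
    (hB : Integrable fun ξ => (1 + ξ ^ 2) ^ s * ‖g ξ‖ ^ 2) :
    Integrable fun ξ => √(1 + ξ ^ 2) * ‖g ξ‖ ^ 2 := by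
  refine hB.mono' ((by fun_prop : Continuous fun ξ : ℝ => √(1 + ξ ^ 2)).aestronglyMeasurable.mul
    (hg.norm.pow 2)) (.of_forall fun ξ => ?_)
  rw [norm_of_nonneg (by positivity)]
  gcongr
  exact sqrt_one_add_sq_le_rpow hs ξ

theorem integral_sqrt_one_add_sq_mul_le_rpow (hs : 1 / 2 ≤ s) (hg : AEStronglyMeasurable g)
    (hB : Integrable fun ξ => (1 + ξ ^ 2) ^ s * ‖g ξ‖ ^ 2) :
    ∫ ξ, √(1 + ξ ^ 2) * ‖g ξ‖ ^ 2 ≤ ∫ ξ, (1 + ξ ^ 2) ^ s * ‖g ξ‖ ^ 2 :=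
  integral_mono (integrable_sqrt_one_add_sq_mul_of_rpow hs hg hB) hB fun ξ => by
    gcongr
    exact sqrt_one_add_sq_le_rpow hs ξ

theorem integral_norm_le_low_add_high (hs : 1 / 2 < s) (hg : AEStronglyMeasurable g)
    (hB : Integrable fun ξ => (1 + ξ ^ 2) ^ s * ‖g ξ‖ ^ 2) {R : ℝ} (hR : 1 ≤ R)
    (hA : 0 < ∫ ξ, √(1 + ξ ^ 2) * ‖g ξ‖ ^ 2) :
    ∫ ξ, ‖g ξ‖ ≤ √(4 * log (2 + R)) * √(∫ ξ, √(1 + ξ ^ 2) * ‖g ξ‖ ^ 2) +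
      √(2 * R ^ (1 - 2 * s) / (2 * s - 1)) * √(∫ ξ, (1 + ξ ^ 2) ^ s * ‖g ξ‖ ^ 2) := by
  have hwinv := integrable_inv_one_add_sq_rpow hs
  have hA' := integrable_sqrt_one_add_sq_mul_of_rpow hs.le hg hB
  have hBpos := hA.trans_le (integral_sqrt_one_add_sq_mul_le_rpow hs.le hg hB)
  rw [← integral_add_compl measurableSet_Icc
    (integrable_norm_of_weighted (fun ξ => by positivity) hg hwinv hB) (s := Icc (-R) R)]
  gcongr
  · refine integral_norm_le_sqrt_mul_sqrt_of_weighted (w := fun ξ => √(1 + ξ ^ 2))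
      (fun ξ => by positivity) hg.restrict ?_ hA'.integrableOn
      (by have := log_pos (by linarith : (1 : ℝ) < 2 + R); positivity) hA ?_
      (setIntegral_le_integral hA' (.of_forall fun ξ => by positivity))
    · exact ((by fun_prop : Continuous fun ξ : ℝ => √(1 + ξ ^ 2)).inv₀
        fun ξ => by positivity).integrableOn_Icc
    · rw [integral_Icc_inv_sqrt_one_add_sq (by linarith)]
      linarith [arsinh_le_two_mul_log_two_add (by linarith : (0 : ℝ) ≤ R)]
  · exact integral_norm_le_sqrt_mul_sqrt_of_weighted (fun ξ => by positivity) hg.restrict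
      hwinv.integrableOn hB.integrableOn
      (div_pos (by positivity) (by linarith)) hBpos
      (integral_compl_Icc_inv_one_add_sq_rpow_le hs (by linarith))
      (setIntegral_le_integral hB (.of_forall fun ξ => by positivity))

theorem exists_integral_norm_le_mul_sqrt_log (hs : 1 / 2 < s) :
    ∃ C > 0, ∀ g : ℝ → E, AEStronglyMeasurable g →
      Integrable (fun ξ => (1 + ξ ^ 2) ^ s * ‖g ξ‖ ^ 2) →
      ∫ ξ, ‖g ξ‖ ≤ C * √(∫ ξ, √(1 + ξ ^ 2) * ‖g ξ‖ ^ 2) *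
        √(log (2 + √(∫ ξ, (1 + ξ ^ 2) ^ s * ‖g ξ‖ ^ 2) / √(∫ ξ, √(1 + ξ ^ 2) * ‖g ξ‖ ^ 2))) := by
  set α := 2 / (2 * s - 1)
  have hα : 0 < α := div_pos two_pos (by linarith)
  refine ⟨2 * √(α + 1) + √α, by positivity, fun g hg hB => ?_⟩
  set A := ∫ ξ, √(1 + ξ ^ 2) * ‖g ξ‖ ^ 2
  set B := ∫ ξ, (1 + ξ ^ 2) ^ s * ‖g ξ‖ ^ 2
  obtain hA0 | hA := (integral_nonneg fun ξ => by positivity : 0 ≤ A).eq_or_lt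
  · rw [integral_norm_eq_zero_of_weighted (fun ξ => by positivity)
      (integrable_sqrt_one_add_sq_mul_of_rpow hs.le hg hB) hA0.symm]
    positivity
  have hAB : A ≤ B := integral_sqrt_one_add_sq_mul_le_rpow hs.le hg hB
  set t := √B / √A
  have ht : 1 ≤ t := (one_le_div (sqrt_pos.2 hA)).2 (sqrt_le_sqrt hAB)
  have hBpos : 0 < B := hA.trans_le hAB
  have hhigh : √(2 * (t ^ α) ^ (1 - 2 * s) / (2 * s - 1)) * √B = √α * √A := by
    have hexp : α * (1 - 2 * s) = -2 := by
      have : 2 * s - 1 ≠ 0 := by linarith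
      simp only [α]
      field_simp
      ring
    rw [← rpow_mul (by positivity), hexp, rpow_neg (by positivity), rpow_two, div_pow,
      sq_sqrt hBpos.le, sq_sqrt hA.le, inv_div,
      show 2 * (A / B) / (2 * s - 1) = α * A / B by simp only [α]; ring,
      sqrt_div (by positivity), sqrt_mul hα.le]
    field_simp
  have hlow : √(4 * log (2 + t ^ α)) ≤ 2 * √(α + 1) * √(log (2 + t)) :=
    calc √(4 * log (2 + t ^ α)) ≤ √(2 ^ 2 * ((α + 1) * log (2 + t))) :=
          sqrt_le_sqrt (by linarith [log_two_add_rpow_le ht hα.le])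
      _ = 2 * √(α + 1) * √(log (2 + t)) := by
          rw [sqrt_mul (by positivity), sqrt_sq two_pos.le, sqrt_mul (by positivity), mul_assoc]
  have hlog : 1 ≤ √(log (2 + t)) := by
    rw [one_le_sqrt, le_log_iff_exp_le (by positivity)]
    linarith [exp_one_lt_three]
  calc ∫ ξ, ‖g ξ‖
      ≤ √(4 * log (2 + t ^ α)) * √A + √(2 * (t ^ α) ^ (1 - 2 * s) / (2 * s - 1)) * √B :=
        integral_norm_le_low_add_high hs hg hB (one_le_rpow ht hα.le) hA
    _ ≤ 2 * √(α + 1) * √(log (2 + t)) * √A + √α * √A * √(log (2 + t)) := by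
        rw [hhigh]
        exact add_le_add (by gcongr) (le_mul_of_one_le_right (by positivity) hlog)
    _ = (2 * √(α + 1) + √α) * √A * √(log (2 + t)) := by ring

end FrequencySplit

/-- Logarithmic Brezis–Gallouët type inequality (Lemma A.3(v)): for `s > 1/2`, there is
`C > 0` such that for every `f ∈ H^s(ℝ)` (described via its Fourier transform `g`, i.e.
`f = 𝓕⁻¹ g` with `∫ (1+ξ²)^s |g(ξ)|² dξ < ∞`),
`‖f‖_{L^∞} ≤ C ‖f‖_{H^{1/2}} (ln(2 + ‖f‖_{H^s}/‖f‖_{H^{1/2}}))^{1/2}`. -/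
theorem log_brezis_gallouet (s : ℝ) (hs : 1 / 2 < s) :
    ∃ C > 0, ∀ g : ℝ → ℂ,
      AEStronglyMeasurable g volume →
      Integrable (fun ξ : ℝ => (1 + ξ ^ 2) ^ s * ‖g ξ‖ ^ 2) →
      ∀ x : ℝ,
        ‖FourierTransformInv.fourierInv g x‖ ≤
          C * (∫ ξ : ℝ, (1 + ξ ^ 2) ^ ((1 : ℝ) / 2) * ‖g ξ‖ ^ 2) ^ ((1 : ℝ) / 2) *
            Real.sqrt (Real.log (2 +
              (∫ ξ : ℝ, (1 + ξ ^ 2) ^ s * ‖g ξ‖ ^ 2) ^ ((1 : ℝ) / 2) /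
                (∫ ξ : ℝ, (1 + ξ ^ 2) ^ ((1 : ℝ) / 2) * ‖g ξ‖ ^ 2) ^ ((1 : ℝ) / 2))) := by
  obtain ⟨C, hC, hbound⟩ := exists_integral_norm_le_mul_sqrt_log (E := ℂ) hs
  refine ⟨C, hC, fun g hg hB x => ?_⟩
  simp only [← sqrt_eq_rpow]
  exact (VectorFourier.norm_fourierIntegral_le_integral_norm _ _ _ _ _).trans (hbound g hg hB)
end

section
/- Let ω > 0, 0 < δ < 1/2, t₀ < 0, and let γ : [t₀, 0) → ℝ and λ : [t₀, 0) → (0,∞) be C¹ with |λ(t) γ'(t) − 1| ≤ C|t|^{4−δ}/λ(t), C t² ≤ λ(t) ≤ t²/C, and |λ(t) − (ω²/4)t²| ≤ C |t|^{4−δ}. Suppose γ(T) = −4/(ω² T) + θ for some T ∈ (t₀, 0) and θ ∈ ℝ. Then for all t ∈ [t₀, T], |γ(t) + 4/(ω² t) − θ| ≤ C' |t|^{1−δ} for some C' depending only on C, δ, ω. -/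
open Set

/-! With `F t = γ t + 4 / (ω² t) - θ`, the identity
`F' = (λ γ' - 1) / λ - (4 / ω²) (λ - ω² t² / 4) / (t² λ)` and the hypotheses give
`|F' t| ≤ K |t|^(-δ)` with `K = 1/C + 4/ω²`. As `F T = 0` and `-K (-t)^(1-δ) / (1-δ)` is an
antiderivative of `K |t|^(-δ)` on `t < 0`, comparing derivatives backwards from `T` gives
`|F t| ≤ K |t|^(1-δ) / (1-δ)`; the comparison is by monotonicity, so no integrability of `γ'` is
needed. -/

theorem abs_sub_le_sub_of_abs_deriv_le {f g f' g' : ℝ → ℝ} {a b : ℝ} (hab : a ≤ b)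
    (hf : ContinuousOn f (Icc a b)) (hg : ContinuousOn g (Icc a b))
    (hf' : ∀ x ∈ Ioo a b, HasDerivAt f (f' x) x) (hg' : ∀ x ∈ Ioo a b, HasDerivAt g (g' x) x)
    (hbound : ∀ x ∈ Ioo a b, |f' x| ≤ g' x) : |f b - f a| ≤ g b - g a := by
  have key : ∀ c : ℝ, |c| = 1 → c * (f b - f a) ≤ g b - g a := by
    intro c hc
    have hmono : MonotoneOn (fun x => g x - c * f x) (Icc a b) := by
      refine monotoneOn_of_hasDerivWithinAt_nonneg (convex_Icc a b)
        (hg.sub (hf.const_smul c)) (f' := fun x => g' x - c * f' x) ?_ ?_ <;>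
        rw [interior_Icc] <;> intro x hx
      · exact ((hg' x hx).sub ((hf' x hx).const_mul c)).hasDerivWithinAt
      · have : c * f' x ≤ |f' x| := by
          simpa [abs_mul, hc] using le_abs_self (c * f' x)
        linarith [hbound x hx]
    have := hmono (left_mem_Icc.2 hab) (right_mem_Icc.2 hab) hab
    linarith
  rw [abs_le']
  exact ⟨by simpa using key 1 (by simp), by simpa using key (-1) (by simp)⟩

theorem hasDerivAt_const_div_mul (a c : ℝ) {x : ℝ} (hx : x ≠ 0) :
    HasDerivAt (fun y => c / (a * y)) (-(c / (a * x ^ 2))) x := by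
  simpa only [div_eq_mul_inv, mul_inv, mul_assoc, mul_neg] using
    (hasDerivAt_inv hx).const_mul (c / a)

theorem hasDerivAt_neg_rpow_const {x : ℝ} (hx : x < 0) (p : ℝ) :
    HasDerivAt (fun y => (-y) ^ p) (-(p * (-x) ^ (p - 1))) x := by
  simpa using (hasDerivAt_id x).neg.rpow_const (p := p) (Or.inl (by simp; linarith))

theorem abs_sub_four_div_mul_sq_le {ω δ C s l d : ℝ} (hω : ω ≠ 0) (hC : 0 < C) (hs : s ≠ 0)
    (hl : C * s ^ 2 ≤ l) (hd : |l * d - 1| ≤ C * |s| ^ ((4 : ℝ) - δ) / l)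
    (hlω : |l - ω ^ 2 / 4 * s ^ 2| ≤ C * |s| ^ ((4 : ℝ) - δ)) :
    |d - 4 / (ω ^ 2 * s ^ 2)| ≤ (1 / C + 4 / ω ^ 2) * |s| ^ (-δ) := by
  have hs2 : 0 < s ^ 2 := by positivity
  have hl0 : 0 < l := lt_of_lt_of_le (by positivity) hl
  set r := |s| ^ (-δ)
  have hpow : |s| ^ ((4 : ℝ) - δ) = s ^ 2 * s ^ 2 * r := by
    rw [sub_eq_add_neg, Real.rpow_add (abs_pos.2 hs), show (4 : ℝ) = (4 : ℕ) by norm_num,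
      Real.rpow_natCast, pow_abs]
    ring_nf
    rw [abs_of_nonneg (by positivity)]
  rw [hpow] at hd hlω
  have hsplit : d - 4 / (ω ^ 2 * s ^ 2)
      = (l * d - 1) / l - 4 / ω ^ 2 * ((l - ω ^ 2 / 4 * s ^ 2) / (s ^ 2 * l)) := by
    field_simp
    ring
  have h1 : |(l * d - 1) / l| ≤ 1 / C * r := by
    rw [abs_div, abs_of_pos hl0, div_le_iff₀ hl0]
    refine hd.trans ?_
    rw [div_le_iff₀ hl0]
    calc C * (s ^ 2 * s ^ 2 * r) = 1 / C * r * (C * s ^ 2) * (C * s ^ 2) := by field_simp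
      _ ≤ 1 / C * r * l * l := by gcongr
  have h2 : |(l - ω ^ 2 / 4 * s ^ 2) / (s ^ 2 * l)| ≤ r := by
    rw [abs_div, abs_of_pos (mul_pos hs2 hl0), div_le_iff₀ (mul_pos hs2 hl0)]
    calc _ ≤ C * (s ^ 2 * s ^ 2 * r) := hlω
      _ = r * (s ^ 2 * (C * s ^ 2)) := by ring
      _ ≤ r * (s ^ 2 * l) := by gcongr
  calc |d - 4 / (ω ^ 2 * s ^ 2)|
      ≤ |(l * d - 1) / l| + 4 / ω ^ 2 * |(l - ω ^ 2 / 4 * s ^ 2) / (s ^ 2 * l)| := by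
        rw [hsplit]
        refine (abs_sub _ _).trans_eq ?_
        rw [abs_mul, abs_of_pos (by positivity : (0 : ℝ) < 4 / ω ^ 2)]
    _ ≤ (1 / C + 4 / ω ^ 2) * r := by
        rw [add_mul]
        gcongr

theorem bootstrap_phase_estimate_general
    (ω δ C : ℝ) (hω : 0 < ω) (hδ' : δ < 1 / 2) (hC : 0 < C) :
    ∃ C' > 0, ∀ (t₀ T θ : ℝ) (γ lam : ℝ → ℝ), t₀ < 0 → T ∈ Ioo t₀ (0 : ℝ) →
      (∀ t ∈ Ico t₀ (0 : ℝ), DifferentiableAt ℝ γ t) →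
      (∀ t ∈ Ico t₀ (0 : ℝ), 0 < lam t) →
      (∀ t ∈ Ico t₀ (0 : ℝ),
        |lam t * deriv γ t - 1| ≤ C * |t| ^ ((4 : ℝ) - δ) / lam t) →
      (∀ t ∈ Ico t₀ (0 : ℝ), C * t ^ 2 ≤ lam t ∧ lam t ≤ t ^ 2 / C) →
      (∀ t ∈ Ico t₀ (0 : ℝ),
        |lam t - ω ^ 2 / 4 * t ^ 2| ≤ C * |t| ^ ((4 : ℝ) - δ)) →
      γ T = -4 / (ω ^ 2 * T) + θ →
      ∀ t ∈ Icc t₀ T,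
        |γ t + 4 / (ω ^ 2 * t) - θ| ≤ C' * |t| ^ ((1 : ℝ) - δ) := by
  set K := 1 / C + 4 / ω ^ 2
  have hδ1 : 0 < 1 - δ := by linarith
  refine ⟨K / (1 - δ), by positivity, ?_⟩
  intro t₀ T θ γ lam _ hT hγ _ hγ' hlam hlam_asym hγT t ht
  set F := fun s => γ s + 4 / (ω ^ 2 * s) - θ
  set G := fun s : ℝ => -(K / (1 - δ) * (-s) ^ (1 - δ))
  have hmem : ∀ s ∈ Icc t T, s ∈ Ico t₀ 0 := fun s hs => ⟨ht.1.trans hs.1, hs.2.trans_lt hT.2⟩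
  have hF : ∀ s ∈ Icc t T, HasDerivAt F (deriv γ s - 4 / (ω ^ 2 * s ^ 2)) s := fun s hs =>
    ((hγ s (hmem s hs)).hasDerivAt.add
      (hasDerivAt_const_div_mul _ 4 (hmem s hs).2.ne)).sub_const θ
  have hG : ∀ s ∈ Icc t T, HasDerivAt G (K * (-s) ^ (-δ)) s := fun s hs => by
    refine (((hasDerivAt_neg_rpow_const (hmem s hs).2 (1 - δ)).const_mul (K / (1 - δ))).neg
      ).congr_deriv ?_
    rw [sub_sub_cancel_left]
    field_simp
  have hbound := abs_sub_le_sub_of_abs_deriv_le ht.2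
    (fun s hs => (hF s hs).continuousAt.continuousWithinAt)
    (fun s hs => (hG s hs).continuousAt.continuousWithinAt)
    (fun s hs => hF s (Ioo_subset_Icc_self hs)) (fun s hs => hG s (Ioo_subset_Icc_self hs))
    (fun s hs => by
      have hs' := hmem s (Ioo_subset_Icc_self hs)
      simpa only [abs_of_neg hs'.2] using abs_sub_four_div_mul_sq_le hω.ne' hC hs'.2.ne
        (hlam s hs').1 (hγ' s hs') (hlam_asym s hs'))
  have hFT : F T = 0 := by
    simp only [F, hγT]
    ring
  have hGT : G T ≤ 0 := by
    have : 0 ≤ (-T) ^ (1 - δ) := Real.rpow_nonneg (by linarith [hT.2]) _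
    simp only [G, neg_nonpos]
    positivity
  rw [hFT, zero_sub, abs_neg] at hbound
  rw [abs_of_neg (ht.2.trans_lt hT.2)]
  linarith

/-- Phase-parameter bootstrap estimate (step (iv) of the proof of Theorem 3.1): if
`|λ γ' - 1| ≤ C |t|^{4-δ}/λ`, `C t² ≤ λ ≤ t²/C`, `|λ - (ω²/4)t²| ≤ C |t|^{4-δ}` on
`[t₀, 0)` and `γ(T) = -4/(ω² T) + θ` at some `T ∈ (t₀, 0)`, then
`|γ(t) + 4/(ω² t) - θ| ≤ C' |t|^{1-δ}` on `[t₀, T]`. -/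
theorem bootstrap_phase_estimate
    (ω δ C : ℝ) (hω : 0 < ω) (hδ : 0 < δ) (hδ' : δ < 1 / 2) (hC : 0 < C) :
    ∃ C' > 0, ∀ (t₀ T θ : ℝ) (γ lam : ℝ → ℝ), t₀ < 0 → T ∈ Ioo t₀ (0 : ℝ) →
      (∀ t ∈ Ico t₀ (0 : ℝ), DifferentiableAt ℝ γ t) →
      (∀ t ∈ Ico t₀ (0 : ℝ), 0 < lam t) →
      (∀ t ∈ Ico t₀ (0 : ℝ),
        |lam t * deriv γ t - 1| ≤ C * |t| ^ ((4 : ℝ) - δ) / lam t) →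
      (∀ t ∈ Ico t₀ (0 : ℝ), C * t ^ 2 ≤ lam t ∧ lam t ≤ t ^ 2 / C) →
      (∀ t ∈ Ico t₀ (0 : ℝ),
        |lam t - ω ^ 2 / 4 * t ^ 2| ≤ C * |t| ^ ((4 : ℝ) - δ)) →
      γ T = -4 / (ω ^ 2 * T) + θ →
      ∀ t ∈ Icc t₀ T,
        |γ t + 4 / (ω ^ 2 * t) - θ| ≤ C' * |t| ^ ((1 : ℝ) - δ) :=
  bootstrap_phase_estimate_general ω δ C hω hδ' hC
end
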